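/- In Ĥ, the subgroup generated by {a, b} is isomorphic to the discrete Heisenberg group 𝓗 = ⟨a, b ∣ [a,[a,b]] = [b,[a,b]] = 1⟩ and has index 2 in Ĥ. -/

import Mathlib

open scoped commutatorElement

/-- The two generators `a, b` of the discrete Heisenberg group. -/
inductive HGen : Type
  | a | b
deriving DecidableEq

/-- Relators of the discrete Heisenberg group `⟨a,b ∣ [a,[a,b]] = [b,[a,b]] = 1⟩`. -/
def Hrels : Set (FreeGroup HGen) :=
  { ⁅FreeGroup.of HGen.a, ⁅FreeGroup.of HGen.a, FreeGroup.of HGen.b⁆⁆,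
    ⁅FreeGroup.of HGen.b, ⁅FreeGroup.of HGen.a, FreeGroup.of HGen.b⁆⁆ }

/-- The discrete Heisenberg group `𝓗`. -/
abbrev Heis : Type := PresentedGroup Hrels

/-- The generator `a` of `𝓗`. -/
def Ha : Heis := PresentedGroup.of HGen.a

/-- The generator `b` of `𝓗`. -/
def Hb : Heis := PresentedGroup.of HGen.b

/-- The four letters of the alphabet `X = {a, a⁻¹, b, b⁻¹}`. -/
inductive XLetter : Type
  | a | A | b | B
deriving DecidableEq

/-- The element of `𝓗` represented by a letter of `X`. -/
def XLetter.toH : XLetter → Heis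
  | .a => Ha
  | .A => Ha⁻¹
  | .b => Hb
  | .B => Hb⁻¹

/-- The element of `𝓗` represented by a word over `X`. -/
def evalX (w : List XLetter) : Heis := (w.map XLetter.toH).prod

/-- The word `a^k` over `X`, for `k ∈ ℤ`. -/
def apow (k : ℤ) : List XLetter :=
  if 0 ≤ k then List.replicate k.toNat XLetter.a else List.replicate (-k).toNat XLetter.A

/-- The word `b^k` over `X`, for `k ∈ ℤ`. -/
def bpow (k : ℤ) : List XLetter :=
  if 0 ≤ k then List.replicate k.toNat XLetter.b else List.replicate (-k).toNat XLetter.B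

/-- The element `(x,y,z)` of `𝓗`, i.e. the element with normal form `[a,b]^z b^y a^x`. -/
def hElt (x y z : ℤ) : Heis := ⁅Ha, Hb⁆ ^ z * Hb ^ y * Ha ^ x

/-- The word length `ℓ_X(g)` of `g ∈ 𝓗` with respect to `X`. -/
noncomputable def lenX (g : Heis) : ℕ :=
  sInf { n | ∃ w : List XLetter, evalX w = g ∧ w.length = n }

/-- A word over `X` is geodesic if its length equals the word length of the
element it represents. -/
def IsGeodesicX (w : List XLetter) : Prop := w.length = lenX (evalX w)

/-- The three generators `a, b, t` of the virtually Heisenberg group `Ĥ`. -/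
inductive VGen : Type
  | a | b | t
deriving DecidableEq

/-- Relators of the virtually Heisenberg group
`Ĥ = ⟨a,b,t ∣ [a,[a,b]] = [b,[a,b]] = t² = 1, tat = b⟩`. -/
def VRels : Set (FreeGroup VGen) :=
  { ⁅FreeGroup.of VGen.a, ⁅FreeGroup.of VGen.a, FreeGroup.of VGen.b⁆⁆,
    ⁅FreeGroup.of VGen.b, ⁅FreeGroup.of VGen.a, FreeGroup.of VGen.b⁆⁆,
    FreeGroup.of VGen.t ^ 2,
    FreeGroup.of VGen.t * FreeGroup.of VGen.a * FreeGroup.of VGen.t *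
      (FreeGroup.of VGen.b)⁻¹ }

/-- The virtually Heisenberg group `Ĥ`. -/
abbrev VH : Type := PresentedGroup VRels

/-- The generator `a` of `Ĥ`. -/
def Va : VH := PresentedGroup.of VGen.a

/-- The generator `b` of `Ĥ`. -/
def Vb : VH := PresentedGroup.of VGen.b

/-- The generator `t` of `Ĥ`. -/
def Vt : VH := PresentedGroup.of VGen.t

/-- The three letters of the alphabet `S = {a, a⁻¹, t}`. -/
inductive SLetter : Type
  | a | A | t
deriving DecidableEq

/-- The element of `Ĥ` represented by a letter of `S`. -/
def SLetter.toV : SLetter → VH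
  | .a => Va
  | .A => Va⁻¹
  | .t => Vt

/-- The element of `Ĥ` represented by a word over `S`. -/
def evalS (w : List SLetter) : VH := (w.map SLetter.toV).prod

/-- The word `a^k` over `S`, for `k ∈ ℤ`. -/
def apowS (k : ℤ) : List SLetter :=
  if 0 ≤ k then List.replicate k.toNat SLetter.a else List.replicate (-k).toNat SLetter.A

/-- The word length `ℓ_S(g)` of `g ∈ Ĥ` with respect to `S`. -/
noncomputable def lenS (g : VH) : ℕ :=
  sInf { n | ∃ w : List SLetter, evalS w = g ∧ w.length = n }

/-- A word over `S` is geodesic if its length equals the word length of the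
element it represents. -/
def IsGeodesicS (w : List SLetter) : Prop := w.length = lenS (evalS w)

/-!
The virtually Heisenberg group is the semidirect product `𝓗 ⋊ C₂`, where the generator of `C₂`
acts on `𝓗` by the involution swapping `a` and `b`: the relations of `Ĥ` say exactly that
`t` is an involution conjugating `a` to `b`. Both presentations give homomorphisms
`Ĥ → 𝓗 ⋊ C₂` and `𝓗 ⋊ C₂ → Ĥ` defined on generators, which are mutually inverse. Under this
isomorphism `⟨a, b⟩ ⊆ Ĥ` corresponds to the image of the embedding `𝓗 ↪ 𝓗 ⋊ C₂`, i.e. to the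
kernel of the projection onto `C₂`; hence it is isomorphic to `𝓗` and has index `|C₂| = 2`.
-/

open SemidirectProduct

theorem commutatorElement_commutatorElement_swap_eq_one {G : Type*} [Group G] {x y z : G}
    (h : ⁅x, ⁅y, z⁆⁆ = 1) : ⁅x, ⁅z, y⁆⁆ = 1 := by
  rw [commutatorElement_eq_one_iff_commute] at h ⊢
  rw [← commutatorElement_inv]
  exact h.inv_right

theorem Multiplicative.zmodTwo_eq_one_or (k : Multiplicative (ZMod 2)) :
    k = 1 ∨ k = Multiplicative.ofAdd 1 := by
  revert k; decide

theorem Multiplicative.zmodTwo_mul_self (k : Multiplicative (ZMod 2)) : k * k = 1 := by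
  revert k; decide

def zmodTwoHom {M : Type*} [Monoid M] (x : M) (hx : x * x = 1) :
    Multiplicative (ZMod 2) →* M where
  toFun k := if k = 1 then 1 else x
  map_one' := if_pos rfl
  map_mul' m n := by
    rcases m.zmodTwo_eq_one_or with rfl | rfl <;> rcases n.zmodTwo_eq_one_or with rfl | rfl <;>
      simp [Multiplicative.zmodTwo_mul_self, hx]

@[simp]
theorem zmodTwoHom_ofAdd_one {M : Type*} [Monoid M] (x : M) (hx : x * x = 1) :
    zmodTwoHom x hx (Multiplicative.ofAdd 1) = x := by
  simp [zmodTwoHom]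

theorem Multiplicative.zmodTwo_hom_ext {M : Type*} [Monoid M]
    {f g : Multiplicative (ZMod 2) →* M} (h : f (.ofAdd 1) = g (.ofAdd 1)) : f = g := by
  refine MonoidHom.ext fun k => ?_
  rcases k.zmodTwo_eq_one_or with rfl | rfl
  · simp
  · exact h

theorem SemidirectProduct.index_range_inl {N G : Type*} [Group N] [Group G]
    (φ : G →* MulAut N) : (inl : N →* N ⋊[φ] G).range.index = Nat.card G := by
  rw [range_inl_eq_ker_rightHom, Subgroup.index_ker,
    MonoidHom.range_eq_top.mpr rightHom_surjective, Subgroup.card_top]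

namespace Heis

theorem comm_Ha_comm_eq_one : ⁅Ha, ⁅Ha, Hb⁆⁆ = 1 := by
  have h := PresentedGroup.one_of_mem (rels := Hrels) (Set.mem_insert _ _)
  rwa [map_commutatorElement, map_commutatorElement] at h

theorem comm_Hb_comm_eq_one : ⁅Hb, ⁅Ha, Hb⁆⁆ = 1 := by
  have h := PresentedGroup.one_of_mem (rels := Hrels) (Set.mem_insert_of_mem _ rfl)
  rwa [map_commutatorElement, map_commutatorElement] at h

theorem hom_ext {G : Type*} [Group G] {f g : Heis →* G} (ha : f Ha = g Ha) (hb : f Hb = g Hb) :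
    f = g :=
  PresentedGroup.ext fun
    | .a => ha
    | .b => hb

def swapHom : Heis →* Heis :=
  PresentedGroup.toGroup (f := fun | .a => Hb | .b => Ha) (by
    rintro r (rfl | rfl)
    · simpa [map_commutatorElement] using
        commutatorElement_commutatorElement_swap_eq_one comm_Hb_comm_eq_one
    · simpa [map_commutatorElement] using
        commutatorElement_commutatorElement_swap_eq_one comm_Ha_comm_eq_one)

@[simp] theorem swapHom_Ha : swapHom Ha = Hb := PresentedGroup.toGroup.of _
@[simp] theorem swapHom_Hb : swapHom Hb = Ha := PresentedGroup.toGroup.of _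

theorem swapHom_comp_swapHom : swapHom.comp swapHom = MonoidHom.id Heis :=
  hom_ext ((congrArg swapHom swapHom_Ha).trans swapHom_Hb)
    ((congrArg swapHom swapHom_Hb).trans swapHom_Ha)

def swap : MulAut Heis :=
  swapHom.toMulEquiv swapHom swapHom_comp_swapHom swapHom_comp_swapHom

@[simp] theorem swap_apply (g : Heis) : swap g = swapHom g := rfl

theorem swap_mul_swap : swap * swap = 1 :=
  MulEquiv.ext fun g => DFunLike.congr_fun swapHom_comp_swapHom g

def swapAction : Multiplicative (ZMod 2) →* MulAut Heis := zmodTwoHom swap swap_mul_swap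

end Heis

namespace VH

theorem hom_ext {G : Type*} [Group G] {f g : VH →* G} (ha : f Va = g Va) (hb : f Vb = g Vb)
    (ht : f Vt = g Vt) : f = g :=
  PresentedGroup.ext fun
    | .a => ha
    | .b => hb
    | .t => ht

theorem Vt_mul_Vt : Vt * Vt = 1 := by
  have h := PresentedGroup.one_of_mem (rels := VRels) (x := FreeGroup.of VGen.t ^ 2)
    (by simp [VRels])
  rwa [map_pow, sq] at h

theorem Vt_mul_Va_mul_Vt : Vt * Va * Vt = Vb := by
  have h := PresentedGroup.one_of_mem (rels := VRels)
    (x := .of VGen.t * .of VGen.a * .of VGen.t * (.of VGen.b)⁻¹)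
    (by simp [VRels])
  rwa [map_mul, map_inv, mul_inv_eq_one] at h

theorem comm_Va_comm_eq_one : ⁅Va, ⁅Va, Vb⁆⁆ = 1 := by
  have h := PresentedGroup.one_of_mem (rels := VRels) (Set.mem_insert _ _)
  rwa [map_commutatorElement, map_commutatorElement] at h

theorem comm_Vb_comm_eq_one : ⁅Vb, ⁅Va, Vb⁆⁆ = 1 := by
  have h := PresentedGroup.one_of_mem (rels := VRels)
    (Set.mem_insert_of_mem _ (Set.mem_insert _ _))
  rwa [map_commutatorElement, map_commutatorElement] at h

end VH

def heisToVH : Heis →* VH :=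
  PresentedGroup.toGroup (f := fun | .a => Va | .b => Vb) (by
    rintro r (rfl | rfl)
    · simpa [map_commutatorElement] using VH.comm_Va_comm_eq_one
    · simpa [map_commutatorElement] using VH.comm_Vb_comm_eq_one)

@[simp] theorem heisToVH_Ha : heisToVH Ha = Va := PresentedGroup.toGroup.of _
@[simp] theorem heisToVH_Hb : heisToVH Hb = Vb := PresentedGroup.toGroup.of _

theorem range_heisToVH : heisToVH.range = Subgroup.closure {Va, Vb} := by
  rw [MonoidHom.range_eq_map, ← PresentedGroup.closure_range_of, MonoidHom.map_closure,
    ← Set.range_comp]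
  congr 1
  ext g
  constructor
  · rintro ⟨_ | _, rfl⟩
    exacts [.inl heisToVH_Ha, .inr heisToVH_Hb]
  · rintro (rfl | rfl)
    exacts [⟨.a, heisToVH_Ha⟩, ⟨.b, heisToVH_Hb⟩]

namespace VH

def toSemidirect : VH →* Heis ⋊[Heis.swapAction] Multiplicative (ZMod 2) :=
  PresentedGroup.toGroup (f := fun | .a => inl Ha | .b => inl Hb | .t => inr (.ofAdd 1)) (by
    rintro r (rfl | rfl | rfl | rfl)
    · simp only [map_commutatorElement, FreeGroup.lift_apply_of]
      rw [← map_commutatorElement, ← map_commutatorElement, Heis.comm_Ha_comm_eq_one, map_one]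
    · simp only [map_commutatorElement, FreeGroup.lift_apply_of]
      rw [← map_commutatorElement, ← map_commutatorElement, Heis.comm_Hb_comm_eq_one, map_one]
    · simp only [map_pow, FreeGroup.lift_apply_of]
      rw [← map_pow, sq, Multiplicative.zmodTwo_mul_self, map_one]
    · simp only [map_mul, map_inv, FreeGroup.lift_apply_of]
      nth_rw 2 [← inv_eq_of_mul_eq_one_right (Multiplicative.zmodTwo_mul_self (.ofAdd 1))]
      rw [← inl_aut, mul_inv_eq_one]
      simp [Heis.swapAction])

@[simp] theorem toSemidirect_Va : toSemidirect Va = inl Ha := PresentedGroup.toGroup.of _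
@[simp] theorem toSemidirect_Vb : toSemidirect Vb = inl Hb := PresentedGroup.toGroup.of _
@[simp] theorem toSemidirect_Vt : toSemidirect Vt = inr (.ofAdd 1) := PresentedGroup.toGroup.of _

theorem Vt_mul_Vb_mul_Vt : Vt * Vb * Vt = Va := by
  rw [← Vt_mul_Va_mul_Vt]
  simp only [mul_assoc, Vt_mul_Vt, mul_one]
  rw [← mul_assoc, Vt_mul_Vt, one_mul]

theorem heisToVH_swapAction (k : Multiplicative (ZMod 2)) :
    heisToVH.comp (Heis.swapAction k).toMonoidHom =
      (MulAut.conj (zmodTwoHom Vt Vt_mul_Vt k)).toMonoidHom.comp heisToVH := by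
  have hVt : Vt⁻¹ = Vt := inv_eq_of_mul_eq_one_right Vt_mul_Vt
  rcases k.zmodTwo_eq_one_or with rfl | rfl <;> refine Heis.hom_ext ?_ ?_ <;>
    simp [Heis.swapAction, hVt, Vt_mul_Va_mul_Vt, Vt_mul_Vb_mul_Vt]

def ofSemidirect : Heis ⋊[Heis.swapAction] Multiplicative (ZMod 2) →* VH :=
  lift heisToVH (zmodTwoHom Vt Vt_mul_Vt) heisToVH_swapAction

@[simp] theorem ofSemidirect_inl (g : Heis) : ofSemidirect (inl g) = heisToVH g := lift_inl ..
@[simp] theorem ofSemidirect_inr_ofAdd_one : ofSemidirect (inr (.ofAdd 1)) = Vt := by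
  simp [ofSemidirect]

def equivSemidirect : VH ≃* Heis ⋊[Heis.swapAction] Multiplicative (ZMod 2) :=
  toSemidirect.toMulEquiv ofSemidirect (hom_ext (by simp) (by simp) (by simp))
    (SemidirectProduct.hom_ext (Heis.hom_ext (by simp) (by simp))
      (Multiplicative.zmodTwo_hom_ext (by simp)))

theorem equivSemidirect_symm_comp_inl :
    equivSemidirect.symm.toMonoidHom.comp inl = heisToVH :=
  MonoidHom.ext ofSemidirect_inl

end VH

theorem heisToVH_injective : Function.Injective heisToVH := by
  rw [← VH.equivSemidirect_symm_comp_inl]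
  exact VH.equivSemidirect.symm.injective.comp inl_injective

theorem index_range_heisToVH : heisToVH.range.index = 2 := by
  rw [← VH.equivSemidirect_symm_comp_inl, MonoidHom.range_comp,
    Subgroup.index_map_of_bijective (f := VH.equivSemidirect.symm.toMonoidHom)
      VH.equivSemidirect.symm.bijective, index_range_inl,
    Nat.card_eq_fintype_card, Fintype.card_multiplicative, ZMod.card]

/-- In `Ĥ`, the subgroup generated by `{a, b}` is isomorphic to the
discrete Heisenberg group `𝓗 = ⟨a,b ∣ [a,[a,b]] = [b,[a,b]] = 1⟩` and has index 2. -/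
theorem vh_heisenberg_subgroup_index_two :
    Nonempty ((Subgroup.closure ({Va, Vb} : Set VH)) ≃* Heis) ∧
    (Subgroup.closure ({Va, Vb} : Set VH)).index = 2 := by
  rw [← range_heisToVH]
  exact ⟨⟨(MonoidHom.ofInjective heisToVH_injective).symm⟩, index_range_heisToVH⟩
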